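/- arXiv:math/9209213 — 4 statements merged into one kernel-verified Lean document; each statement's English description precedes it below -/
import Mathlib

section
/- For 0<p<1 and a nonempty subset A of a real vector space X, the p-convex hull of A ∪ {0} equals {0} ∪ p-conv(A), and also equals the set of all finite combinations ∑_{i=1}^n λ_i x_i with λ_i ≥ 0, ∑_{i=1}^n λ_i^p ≤ 1, and x_i ∈ A. -/
open Finset

def PConvex {X : Type*} [AddCommGroup X] [Module ℝ X] (p : ℝ) (S : Set X) : Prop :=
  ∀ x ∈ S, ∀ y ∈ S, ∀ a b : ℝ, 0 ≤ a → 0 ≤ b → a ^ p + b ^ p = 1 → a • x + b • y ∈ S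

def pConvHull {X : Type*} [AddCommGroup X] [Module ℝ X] (p : ℝ) (A : Set X) : Set X :=
  ⋂₀ {S : Set X | PConvex p S ∧ A ⊆ S}

section Aux

variable {X : Type*} [AddCommGroup X] [Module ℝ X] {p : ℝ}

lemma subset_pConvHull (A : Set X) : A ⊆ pConvHull p A := by
  intro x hx
  exact Set.mem_sInter.mpr fun S hS => hS.2 hx

lemma pConvHull_min {A S : Set X} (h1 : PConvex p S) (h2 : A ⊆ S) : pConvHull p A ⊆ S :=
  Set.sInter_subset_of_mem ⟨h1, h2⟩

lemma pConvex_pConvHull (A : Set X) : PConvex p (pConvHull p A) := by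
  intro x hx y hy a b ha hb hab
  exact Set.mem_sInter.mpr fun S hS =>
    hS.1 x (Set.mem_sInter.mp hx S hS) y (Set.mem_sInter.mp hy S hS) a b ha hb hab

/-- Sums with total p-mass exactly 1 belong to every p-convex set containing the points. -/
lemma sum_mem_of_pconvex (hp0 : 0 < p) {S : Set X} (hS : PConvex p S) :
    ∀ (n : ℕ) (l : Fin n → ℝ) (y : Fin n → X), (∀ i, 0 ≤ l i) → (∀ i, y i ∈ S) →
      (∑ i, l i ^ p) = 1 → (∑ i, l i • y i) ∈ S := by
  intro n
  induction n with
  | zero => intro l y _ _ h; simp at h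
  | succ n ih =>
    intro l y hl hy hsum
    rw [Fin.sum_univ_castSucc] at hsum ⊢
    set t := ∑ i : Fin n, l (Fin.castSucc i) ^ p with ht
    have htnn : 0 ≤ t := Finset.sum_nonneg fun i _ => Real.rpow_nonneg (hl _) _
    rcases eq_or_lt_of_le htnn with h0 | hpos
    · have hall : ∀ i : Fin n, l (Fin.castSucc i) = 0 := by
        intro i
        have hz : l (Fin.castSucc i) ^ p = 0 :=
          (Finset.sum_eq_zero_iff_of_nonneg
            (fun i _ => Real.rpow_nonneg (hl _) _)).mp h0.symm i (mem_univ i)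
        exact (Real.rpow_eq_zero (hl _) hp0.ne').mp hz
      have hb1 : l (Fin.last n) = 1 := by
        have hbp : l (Fin.last n) ^ p = 1 := by rw [← h0] at hsum; linarith
        have := Real.rpow_rpow_inv (hl (Fin.last n)) hp0.ne'
        rw [hbp, Real.one_rpow] at this
        exact this.symm
      have : (∑ i : Fin n, l (Fin.castSucc i) • y (Fin.castSucc i)) = 0 := by
        apply Finset.sum_eq_zero; intro i _; rw [hall i, zero_smul]
      rw [this, hb1, zero_add, one_smul]
      exact hy _
    · set s := t ^ p⁻¹ with hsdef
      have hs0 : 0 < s := Real.rpow_pos_of_pos hpos _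
      have hsp : s ^ p = t := Real.rpow_inv_rpow htnn hp0.ne'
      have hq : (∑ i : Fin n, (l (Fin.castSucc i) / s) • y (Fin.castSucc i)) ∈ S := by
        apply ih _ _ (fun i => div_nonneg (hl _) hs0.le) (fun i => hy _)
        have : ∀ i : Fin n, (l (Fin.castSucc i) / s) ^ p = l (Fin.castSucc i) ^ p / t := by
          intro i; rw [Real.div_rpow (hl _) hs0.le, hsp]
        rw [Finset.sum_congr rfl (fun i _ => this i), ← Finset.sum_div]
        exact div_self hpos.ne'
      have hcomb := hS _ hq _ (hy (Fin.last n)) s (l (Fin.last n)) hs0.le (hl _)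
        (by rw [hsp]; exact hsum)
      rw [Finset.smul_sum] at hcomb
      have : ∀ i : Fin n, s • (l (Fin.castSucc i) / s) • y (Fin.castSucc i)
          = l (Fin.castSucc i) • y (Fin.castSucc i) := by
        intro i; rw [smul_smul, mul_div_cancel₀ _ hs0.ne']
      rwa [Finset.sum_congr rfl (fun i _ => this i)] at hcomb

lemma exists_split (hp0 : 0 < p) {s : ℝ}
    (hcs : (2:ℝ) ^ ((p-1)/p) ≤ s) (hs1 : s ≤ 1) :
    ∃ a b : ℝ, 0 ≤ a ∧ 0 ≤ b ∧ a + b = s ∧ a ^ p + b ^ p = 1 := by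
  have hs0 : 0 < s := lt_of_lt_of_le (Real.rpow_pos_of_pos two_pos _) hcs
  set f : ℝ → ℝ := fun a => a ^ p + (s - a) ^ p with hf
  have hcont : ContinuousOn f (Set.Icc (s/2) s) := by
    apply ContinuousOn.add
    · intro a _
      exact (Real.continuousAt_rpow_const a p (Or.inr hp0.le)).continuousWithinAt
    · intro a _
      exact ((Real.continuousAt_rpow_const (s - a) p (Or.inr hp0.le)).comp
        ((continuous_const.sub continuous_id).continuousAt)).continuousWithinAt
  have hfs : f s = s ^ p := by
    simp only [hf, sub_self, Real.zero_rpow hp0.ne', add_zero]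
  have hfs2 : f (s/2) = 2 * (s/2) ^ p := by
    simp only [hf]; ring_nf
  have h2p : (0:ℝ) < 2 ^ p := Real.rpow_pos_of_pos two_pos _
  have hsple : s ^ p ≤ 1 := Real.rpow_le_one hs0.le hs1 hp0.le
  have hspge : (2:ℝ) ^ (p - 1) ≤ s ^ p := by
    have := Real.rpow_le_rpow (Real.rpow_nonneg (by norm_num) _) hcs hp0.le
    rwa [← Real.rpow_mul (by norm_num), div_mul_cancel₀ _ hp0.ne'] at this
  have h1le : 1 ≤ f (s/2) := by
    rw [hfs2, Real.div_rpow hs0.le (by norm_num)]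
    have h21 : (2:ℝ) ^ (p-1) = 2 ^ p / 2 := by
      rw [Real.rpow_sub two_pos, Real.rpow_one]
    rw [h21] at hspge
    rw [mul_div_assoc', one_le_div h2p]
    linarith
  have hmem : (1:ℝ) ∈ Set.Icc (f s) (f (s/2)) := ⟨by rw [hfs]; exact hsple, h1le⟩
  obtain ⟨a, ha, hfa⟩ := intermediate_value_Icc' (by linarith : s/2 ≤ s) hcont hmem
  exact ⟨a, s - a, le_trans (by linarith) ha.1, by linarith [ha.2], by ring, hfa⟩

lemma smul_mem_of_pconvex (hp0 : 0 < p) (hp1 : p < 1) {S : Set X} (hS : PConvex p S)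
    {q : X} (hq : q ∈ S) : ∀ s : ℝ, 0 < s → s ≤ 1 → s • q ∈ S := by
  set c : ℝ := (2:ℝ) ^ ((p-1)/p) with hc
  have hc0 : 0 < c := Real.rpow_pos_of_pos two_pos _
  have hc1 : c < 1 := Real.rpow_lt_one_of_one_lt_of_neg one_lt_two
    (div_neg_of_neg_of_pos (by linarith) hp0)
  have key : ∀ n : ℕ, ∀ s : ℝ, c ^ n ≤ s → s ≤ 1 → s • q ∈ S := by
    intro n
    induction n with
    | zero =>
      intro s h1 h2
      have : s = 1 := le_antisymm h2 (by simpa using h1)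
      rw [this, one_smul]; exact hq
    | succ n ih =>
      intro s h1 h2
      by_cases hcs : c ≤ s
      · obtain ⟨a, b, ha, hb, hab, habp⟩ := exists_split hp0 hcs h2
        have := hS q hq q hq a b ha hb habp
        rwa [← add_smul, hab] at this
      · push_neg at hcs
        have hs0 : 0 < s := lt_of_lt_of_le (pow_pos hc0 (n+1)) h1
        have h1' : c ^ n ≤ s / c := by
          rw [le_div_iff₀ hc0]
          calc c ^ n * c = c ^ (n+1) := (pow_succ c n).symm
            _ ≤ s := h1
        have h2' : s / c ≤ 1 := by rw [div_le_one hc0]; exact hcs.le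
        have hin := ih (s/c) h1' h2'
        obtain ⟨a, b, ha, hb, hab, habp⟩ := exists_split hp0 (le_refl c) hc1.le
        have := hS _ hin _ hin a b ha hb habp
        rwa [← add_smul, hab, smul_smul, mul_div_cancel₀ _ hc0.ne'] at this
  intro s hs0 hs1
  obtain ⟨n, hn⟩ := exists_pow_lt_of_lt_one hs0 hc1
  exact key n s hn.le hs1

/-- Sums with total p-mass in (0,1] belong to every p-convex set containing the points. -/
lemma sum_le_mem_of_pconvex (hp0 : 0 < p) (hp1 : p < 1) {S : Set X} (hS : PConvex p S)
    {n : ℕ} {l : Fin n → ℝ} {y : Fin n → X}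
    (hl : ∀ i, 0 ≤ l i) (hy : ∀ i, y i ∈ S)
    (hpos : 0 < ∑ i, l i ^ p) (hle : (∑ i, l i ^ p) ≤ 1) :
    (∑ i, l i • y i) ∈ S := by
  set t := ∑ i, l i ^ p with htdef
  set s := t ^ p⁻¹ with hsdef
  have hs0 : 0 < s := Real.rpow_pos_of_pos hpos _
  have hsp : s ^ p = t := Real.rpow_inv_rpow hpos.le hp0.ne'
  have hs1 : s ≤ 1 := Real.rpow_le_one hpos.le hle (by positivity)
  have hq : (∑ i, (l i / s) • y i) ∈ S := by
    apply sum_mem_of_pconvex hp0 hS n _ _ (fun i => div_nonneg (hl _) hs0.le) hy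
    have : ∀ i, (l i / s) ^ p = l i ^ p / t := by
      intro i; rw [Real.div_rpow (hl _) hs0.le, hsp]
    rw [Finset.sum_congr rfl (fun i _ => this i), ← Finset.sum_div]
    exact div_self hpos.ne'
  have := smul_mem_of_pconvex hp0 hp1 hS hq s hs0 hs1
  rw [Finset.smul_sum] at this
  have heq : ∀ i, s • (l i / s) • y i = l i • y i := by
    intro i; rw [smul_smul, mul_div_cancel₀ _ hs0.ne']
  rwa [Finset.sum_congr rfl (fun i _ => heq i)] at this

end Aux

theorem pConvHull_union_zero {X : Type*} [AddCommGroup X] [Module ℝ X]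
    (p : ℝ) (hp0 : 0 < p) (hp1 : p < 1) (A : Set X) (hA : A.Nonempty) :
    pConvHull p (A ∪ {0}) = {0} ∪ pConvHull p A ∧
    pConvHull p (A ∪ {0}) =
      {x : X | ∃ (n : ℕ) (l : Fin n → ℝ) (y : Fin n → X),
        (∀ i, 0 ≤ l i) ∧ (∑ i, l i ^ p) ≤ 1 ∧ (∀ i, y i ∈ A) ∧
        x = ∑ i, l i • y i} := by
  have hrle1 : ∀ a b : ℝ, 0 ≤ a → 0 ≤ b → a ^ p + b ^ p = 1 → b ≤ 1 := by
    intro a b ha hb hab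
    have hbp : b ^ p ≤ 1 := by
      have : 0 ≤ a ^ p := Real.rpow_nonneg ha _
      linarith
    have := Real.rpow_le_rpow (Real.rpow_nonneg hb p) hbp (by positivity : (0:ℝ) ≤ p⁻¹)
    rwa [Real.rpow_rpow_inv hb hp0.ne', Real.one_rpow] at this
  constructor
  · apply Set.Subset.antisymm
    · apply pConvHull_min
      · -- {0} ∪ pConvHull p A is p-convex
        intro x hx y hy a b ha hb hab
        have hmix : ∀ z : X, z ∈ pConvHull p A → ∀ c : ℝ, 0 ≤ c → c ^ p ≤ 1 →
            c • z ∈ ({0} ∪ pConvHull p A : Set X) := by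
          intro z hz c hc hcp
          rcases eq_or_lt_of_le hc with h | h
          · left; rw [← h, zero_smul]; rfl
          · right
            have hc1 : c ≤ 1 := by
              have := Real.rpow_le_rpow (Real.rpow_nonneg hc p) hcp
                (by positivity : (0:ℝ) ≤ p⁻¹)
              rwa [Real.rpow_rpow_inv hc hp0.ne', Real.one_rpow] at this
            exact smul_mem_of_pconvex hp0 hp1 (pConvex_pConvHull A) hz c h hc1
        rcases hx with hx0 | hxA
        · rcases hy with hy0 | hyA
          · left
            rw [Set.mem_singleton_iff] at hx0 hy0
            rw [hx0, hy0, smul_zero, smul_zero, add_zero]; rfl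
          · rw [Set.mem_singleton_iff] at hx0
            rw [hx0, smul_zero, zero_add]
            exact hmix y hyA b hb (by
              have : 0 ≤ a ^ p := Real.rpow_nonneg ha _
              linarith)
        · rcases hy with hy0 | hyA
          · rw [Set.mem_singleton_iff] at hy0
            rw [hy0, smul_zero, add_zero]
            exact hmix x hxA a ha (by
              have : 0 ≤ b ^ p := Real.rpow_nonneg hb _
              linarith)
          · right
            exact pConvex_pConvHull A x hxA y hyA a b ha hb hab
      · -- A ∪ {0} ⊆ {0} ∪ pConvHull p A
        intro x hx
        rcases hx with hxA | hx0
        · exact Or.inr (subset_pConvHull A hxA)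
        · exact Or.inl hx0
    · -- {0} ∪ pConvHull p A ⊆ pConvHull p (A ∪ {0})
      intro x hx
      rcases hx with hx0 | hxh
      · exact subset_pConvHull (A ∪ {0}) (Or.inr hx0)
      · exact pConvHull_min (pConvex_pConvHull (A ∪ {0}))
          (fun z hz => subset_pConvHull (A ∪ {0}) (Or.inl hz)) hxh
  · apply Set.Subset.antisymm
    · apply pConvHull_min
      · -- the set of combinations is p-convex
        rintro x ⟨n, l, y, hl, hsum, hy, hx⟩ z ⟨m, l', y', hl', hsum', hy', hz⟩ a b ha hb hab
        refine ⟨n + m, Fin.append (fun i => a * l i) (fun j => b * l' j),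
          Fin.append y y', ?_, ?_, ?_, ?_⟩
        · intro i
          rcases Nat.lt_or_ge i.val n with h | h
          · have : i = Fin.castAdd m ⟨i, h⟩ := by ext; simp
            rw [this, Fin.append_left]
            exact mul_nonneg ha (hl _)
          · have : i = Fin.natAdd n ⟨i - n, by omega⟩ := by ext; simp; omega
            rw [this, Fin.append_right]
            exact mul_nonneg hb (hl' _)
        · rw [Fin.sum_univ_add]
          simp only [Fin.append_left, Fin.append_right]
          have h1 : ∀ i : Fin n, (a * l i) ^ p = a ^ p * l i ^ p :=
            fun i => Real.mul_rpow ha (hl i)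
          have h2 : ∀ j : Fin m, (b * l' j) ^ p = b ^ p * l' j ^ p :=
            fun j => Real.mul_rpow hb (hl' j)
          rw [Finset.sum_congr rfl (fun i _ => h1 i), Finset.sum_congr rfl (fun j _ => h2 j),
            ← Finset.mul_sum, ← Finset.mul_sum]
          have hap : 0 ≤ a ^ p := Real.rpow_nonneg ha _
          have hbp : 0 ≤ b ^ p := Real.rpow_nonneg hb _
          calc a ^ p * (∑ i, l i ^ p) + b ^ p * (∑ j, l' j ^ p)
              ≤ a ^ p * 1 + b ^ p * 1 := by
                gcongr
            _ = 1 := by rw [mul_one, mul_one]; exact hab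
        · intro i
          rcases Nat.lt_or_ge i.val n with h | h
          · have : i = Fin.castAdd m ⟨i, h⟩ := by ext; simp
            rw [this, Fin.append_left]; exact hy _
          · have : i = Fin.natAdd n ⟨i - n, by omega⟩ := by ext; simp; omega
            rw [this, Fin.append_right]; exact hy' _
        · rw [Fin.sum_univ_add]
          simp only [Fin.append_left, Fin.append_right]
          rw [hx, hz, Finset.smul_sum, Finset.smul_sum]
          congr 1 <;> exact Finset.sum_congr rfl fun i _ => smul_smul _ _ _
      · -- A ∪ {0} is contained in the set of combinations
        intro x hx
        rcases hx with hxA | hx0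
        · refine ⟨1, fun _ => 1, fun _ => x, fun _ => zero_le_one, ?_, fun _ => hxA, ?_⟩
          · simp [Real.one_rpow]
          · simp
        · refine ⟨0, Fin.elim0, Fin.elim0, fun i => i.elim0, by simp, fun i => i.elim0, ?_⟩
          simpa using hx0
    · -- combinations ⊆ pConvHull p (A ∪ {0})
      rintro x ⟨n, l, y, hl, hsum, hy, hx⟩
      have htnn : 0 ≤ ∑ i, l i ^ p :=
        Finset.sum_nonneg fun i _ => Real.rpow_nonneg (hl _) _
      rcases eq_or_lt_of_le htnn with h0 | hpos
      · have : x = 0 := by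
          rw [hx]
          apply Finset.sum_eq_zero
          intro i _
          have hz : l i ^ p = 0 :=
            (Finset.sum_eq_zero_iff_of_nonneg
              (fun i _ => Real.rpow_nonneg (hl _) _)).mp h0.symm i (mem_univ i)
          rw [(Real.rpow_eq_zero (hl _) hp0.ne').mp hz, zero_smul]
        rw [this]
        exact subset_pConvHull (A ∪ {0}) (Or.inr rfl)
      · rw [hx]
        exact sum_le_mem_of_pconvex hp0 hp1 (pConvex_pConvHull (A ∪ {0})) hl
          (fun i => subset_pConvHull (A ∪ {0}) (Or.inl (hy i))) hpos hsum
end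

section
/- Let 0<p<1, let {e_1,...,e_n} be the canonical basis of R^n, and let Q = (a_1,...,a_n) ∈ R^n be nonzero. Define K = {λ ∈ R^n : λ_i ≥ 0, ∑λ_i^p ≤ 1}, μ(λ) = (1 - ∑λ_i^p)^{1/p}, and φ: K → R^n by φ(λ) = ∑λ_i e_i + μ(λ) Q. Then the Jacobian determinant of φ at an interior point λ of K equals 1 - ∑_{i=1}^n a_i (μ(λ)/λ_i)^{1-p}. -/
/-! The map is `t ↦ t + μ(t) • a`, so its derivative is the rank-one perturbation
`id + Dμ(λ) ⊗ a` of the identity, whose determinant is `1 + Dμ(λ) a`. By the chain rule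
`∂μ/∂tᵢ = -(1 - ∑ λⱼ^p)^(1/p - 1) λᵢ^(p-1) = -(μ(λ)/λᵢ)^(1-p)`. -/

open Finset

theorem LinearMap.det_id_add_smulRight {R ι : Type*} [CommRing R] [Fintype ι] [DecidableEq ι]
    (f : (ι → R) →ₗ[R] R) (v : ι → R) :
    LinearMap.det (LinearMap.id + f.smulRight v) = 1 + f v := by
  set w : ι → R := fun j => f (Pi.single j 1)
  have hf : ∀ u, f u = w ⬝ᵥ u := fun u => by
    rw [f.pi_apply_eq_sum_univ u]
    simp only [dotProduct, w, smul_eq_mul, mul_comm]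
    congr! with j
    simp [Pi.single_apply, eq_comm]
  have hmat : LinearMap.id + f.smulRight v =
      Matrix.toLin' (1 + Matrix.replicateCol Unit v * Matrix.replicateRow Unit w) := by
    refine LinearMap.ext fun u => funext fun i => ?_
    simp [-Matrix.mulVec_mulVec, hf, Matrix.mulVec, dotProduct, mul_comm]
  rw [hmat, LinearMap.det_toLin', Matrix.det_one_add_replicateCol_mul_replicateRow, hf]

theorem hasFDerivAt_sum_rpow {ι : Type*} [Fintype ι] {p : ℝ} {l : ι → ℝ} (hl : ∀ i, l i ≠ 0) :
    HasFDerivAt (fun t : ι → ℝ => ∑ i, t i ^ p)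
      (∑ i, (p * l i ^ (p - 1)) • ContinuousLinearMap.proj (R := ℝ) (φ := fun _ : ι => ℝ) i) l :=
  HasFDerivAt.fun_sum fun i _ => (hasFDerivAt_apply i l).rpow_const (Or.inl (hl i))

theorem Real.rpow_one_div_div_rpow_one_sub {p s x : ℝ} (hp : p ≠ 0) (hs : 0 ≤ s) (hx : 0 ≤ x) :
    (s ^ (1 / p) / x) ^ (1 - p) = s ^ (1 / p - 1) * x ^ (p - 1) := by
  rw [Real.div_rpow (Real.rpow_nonneg hs _) hx, ← Real.rpow_mul hs, div_eq_mul_inv,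
    ← Real.rpow_neg hx]
  congr 2
  · field_simp
  · ring

theorem jacobian_formula_general (p : ℝ) (hp0 : 0 < p) (n : ℕ)
    (a : Fin n → ℝ) (l : Fin n → ℝ)
    (hl : ∀ i, 0 < l i) (hint : (∑ i, l i ^ p) < 1) :
    LinearMap.det
        ((fderiv ℝ (fun t : Fin n → ℝ =>
            t + ((1 - ∑ i, t i ^ p) ^ (1 / p)) • a) l :
          (Fin n → ℝ) →L[ℝ] (Fin n → ℝ)) : (Fin n → ℝ) →ₗ[ℝ] (Fin n → ℝ)) =
      1 - ∑ i, a i * (((1 - ∑ j, l j ^ p) ^ (1 / p)) / l i) ^ (1 - p) := by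
  have hs : 0 < 1 - ∑ j, l j ^ p := sub_pos.mpr hint
  have hμ := ((hasFDerivAt_const 1 l).fun_sub
    (hasFDerivAt_sum_rpow (p := p) fun i => (hl i).ne')).rpow_const (p := 1 / p) (Or.inl hs.ne')
  have hφ : HasFDerivAt (fun t : Fin n → ℝ => t + (1 - ∑ i, t i ^ p) ^ (1 / p) • a) _ l :=
    (hasFDerivAt_id l).add (hμ.smul_const a)
  have hterm : ∀ i, a i * ((1 - ∑ j, l j ^ p) ^ (1 / p) / l i) ^ (1 - p) =
      1 / p * (1 - ∑ j, l j ^ p) ^ (1 / p - 1) * (p * l i ^ (p - 1) * a i) := fun i => by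
    rw [Real.rpow_one_div_div_rpow_one_sub hp0.ne' hs.le (hl i).le]
    field_simp
  rw [hφ.fderiv, sum_congr rfl fun i _ => hterm i]
  refine (LinearMap.det_id_add_smulRight _ a).trans ?_
  simp [mul_sum, sub_eq_add_neg]

theorem jacobian_formula (p : ℝ) (hp0 : 0 < p) (hp1 : p < 1) (n : ℕ)
    (a : Fin n → ℝ) (ha : a ≠ 0) (l : Fin n → ℝ)
    (hl : ∀ i, 0 < l i) (hint : (∑ i, l i ^ p) < 1) :
    LinearMap.det
        ((fderiv ℝ (fun t : Fin n → ℝ =>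
            t + ((1 - ∑ i, t i ^ p) ^ (1 / p)) • a) l :
          (Fin n → ℝ) →L[ℝ] (Fin n → ℝ)) : (Fin n → ℝ) →ₗ[ℝ] (Fin n → ℝ)) =
      1 - ∑ i, a i * (((1 - ∑ j, l j ^ p) ^ (1 / p)) / l i) ^ (1 - p) :=
  jacobian_formula_general p hp0 n a l hl hint
end

section
/- Let 0<p<1 and let {P_1,...,P_n} ⊆ R^n be linearly independent and Q ∈ R^n. If M belongs to the p-convex hull of {P_1,...,P_n, Q, 0}, then there exist n points P_{i_1},...,P_{i_n} among {P_1,...,P_n,Q} such that M belongs to the p-convex hull of {P_{i_1},...,P_{i_n}, 0}. -/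
open Finset

/-!
The `p`-convex hull of `{v i} ∪ {0}` is the set of combinations `∑ cᵢ • vᵢ` with `c ≥ 0` and
`∑ cᵢ ^ p ≤ 1`. Any `n + 1` vectors of `ℝⁿ` satisfy a nontrivial linear relation `k`, and moving
`c` to `c + t • k` does not change the combination. The admissible `t` (those with
`c + t • k ≥ 0`) form an interval containing `0`, at each finite end of which some coefficient
vanishes. As `t ↦ ∑ (cᵢ + t kᵢ) ^ p` is concave, it is at most its value at `0` at one of the two
ends; if the interval is a half-line, all coefficients decrease towards its finite end. Either way
one of the `n + 1` points can be dropped.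
-/

section PConvex

variable {X : Type*} [AddCommGroup X] [Module ℝ X] {p : ℝ} {S : Set X}

theorem PConvex.smul_add_smul_mem (hS : PConvex p S) (h0 : (0 : X) ∈ S) (hp : 0 < p)
    {x y : X} (hx : x ∈ S) (hy : y ∈ S) {a b : ℝ} (ha : 0 ≤ a) (hb : 0 ≤ b)
    (hab : a ^ p + b ^ p ≤ 1) : a • x + b • y ∈ S := by
  set T := a ^ p + b ^ p
  have hT : 0 ≤ T := by positivity
  rcases hT.eq_or_lt with hT0 | hTpos
  · obtain ⟨ha0, hb0⟩ :=
      (add_eq_zero_iff_of_nonneg (Real.rpow_nonneg ha p) (Real.rpow_nonneg hb p)).1 hT0.symm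
    rw [Real.rpow_eq_zero ha hp.ne'] at ha0
    rw [Real.rpow_eq_zero hb hp.ne'] at hb0
    simpa [ha0, hb0] using h0
  -- `a • x + b • y = r • ((a / r) • x + (b / r) • y) + r' • 0` with `r ^ p = T`, `r' ^ p = 1 - T`
  set r := T ^ p⁻¹
  have hr : 0 < r := Real.rpow_pos_of_pos hTpos _
  have hrp : r ^ p = T := Real.rpow_inv_rpow hT hp.ne'
  have hz : (a / r) • x + (b / r) • y ∈ S := by
    refine hS x hx y hy _ _ (div_nonneg ha hr.le) (div_nonneg hb hr.le) ?_
    rw [Real.div_rpow ha hr.le, Real.div_rpow hb hr.le, ← add_div, hrp, div_self hTpos.ne']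
  have hr' : r ^ p + ((1 - T) ^ p⁻¹) ^ p = 1 := by
    rw [hrp, Real.rpow_inv_rpow (by linarith) hp.ne']; ring
  have := hS _ hz 0 h0 r _ hr.le (Real.rpow_nonneg (by linarith) _) hr'
  rwa [smul_zero, add_zero, smul_add, smul_smul, smul_smul, mul_div_cancel₀ _ hr.ne',
    mul_div_cancel₀ _ hr.ne'] at this

theorem PConvex.sum_smul_mem {ι : Type*} (hS : PConvex p S) (h0 : (0 : X) ∈ S) (hp : 0 < p)
    (s : Finset ι) {v : ι → X} (hv : ∀ i ∈ s, v i ∈ S) {c : ι → ℝ} (hc : ∀ i, 0 ≤ c i)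
    (hcs : ∑ i ∈ s, c i ^ p ≤ 1) : ∑ i ∈ s, c i • v i ∈ S := by
  classical
  induction s using Finset.induction_on generalizing c with
  | empty => simpa using h0
  | insert j s hj ih =>
    rw [sum_insert hj] at hcs ⊢
    set T := ∑ i ∈ s, c i ^ p
    have hT : 0 ≤ T := sum_nonneg fun i _ => Real.rpow_nonneg (hc i) p
    set r := T ^ p⁻¹
    have hr : 0 ≤ r := Real.rpow_nonneg hT _
    have hrp : r ^ p = T := Real.rpow_inv_rpow hT hp.ne'
    have hcr : ∀ i ∈ s, r * (c i / r) = c i := fun i hi =>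
      mul_div_cancel_of_imp' fun hr0 => by
        have : c i ^ p ≤ r ^ p := hrp ▸ single_le_sum (fun i _ => Real.rpow_nonneg (hc i) p) hi
        exact le_antisymm (hr0 ▸ (Real.rpow_le_rpow_iff (hc i) hr hp).1 this) (hc i)
    have hy : ∑ i ∈ s, (c i / r) • v i ∈ S := by
      refine ih (fun i hi => hv i (mem_insert_of_mem hi)) (fun i => div_nonneg (hc i) hr) ?_
      simp_rw [Real.div_rpow (hc _) hr, ← sum_div, hrp]
      exact div_self_le_one T
    have := hS.smul_add_smul_mem h0 hp (hv j (mem_insert_self j s)) hy (hc j) hr (by linarith)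
    rwa [smul_sum, sum_congr rfl fun i hi => by rw [smul_smul, hcr i hi]] at this

end PConvex

section Representation

variable {X ι : Type*} [AddCommGroup X] [Module ℝ X] [Fintype ι] {p : ℝ}

def pCombinations (p : ℝ) (v : ι → X) : Set X :=
  {x | ∃ c : ι → ℝ, 0 ≤ c ∧ ∑ i, c i ^ p ≤ 1 ∧ ∑ i, c i • v i = x}

theorem pConvex_pCombinations (hp0 : 0 < p) (hp1 : p ≤ 1) (v : ι → X) :
    PConvex p (pCombinations p v) := by
  rintro _ ⟨c, hc, hcs, rfl⟩ _ ⟨d, hd, hds, rfl⟩ a b ha hb hab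
  refine ⟨a • c + b • d, add_nonneg (smul_nonneg ha hc) (smul_nonneg hb hd), ?_, ?_⟩
  · calc ∑ i, (a * c i + b * d i) ^ p
        ≤ ∑ i, ((a * c i) ^ p + (b * d i) ^ p) := sum_le_sum fun i _ =>
          Real.rpow_add_le_add_rpow (mul_nonneg ha (hc i)) (mul_nonneg hb (hd i)) hp0.le hp1
      _ = a ^ p * ∑ i, c i ^ p + b ^ p * ∑ i, d i ^ p := by
          simp only [Real.mul_rpow ha (hc _), Real.mul_rpow hb (hd _), sum_add_distrib, mul_sum]
      _ ≤ a ^ p * 1 + b ^ p * 1 := by gcongr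
      _ = 1 := by rw [mul_one, mul_one, hab]
  · simp only [Pi.add_apply, Pi.smul_apply, smul_eq_mul, add_smul, mul_smul, sum_add_distrib,
      smul_sum]

theorem range_union_zero_subset_pCombinations (hp0 : 0 < p) (v : ι → X) :
    Set.range v ∪ {0} ⊆ pCombinations p v := by
  classical
  rintro _ (⟨j, rfl⟩ | rfl)
  · refine ⟨Pi.single j 1, Pi.single_nonneg.2 zero_le_one, ?_, by simp⟩
    simp [apply_ite (· ^ p), Pi.single_apply, Real.zero_rpow hp0.ne']
  · exact ⟨0, le_rfl, by simp [Real.zero_rpow hp0.ne'], by simp⟩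

theorem pConvHull_range_union_zero (hp0 : 0 < p) (hp1 : p ≤ 1) (v : ι → X) :
    pConvHull p (Set.range v ∪ {0}) = pCombinations p v := by
  refine subset_antisymm (Set.sInter_subset_of_mem
    ⟨pConvex_pCombinations hp0 hp1 v, range_union_zero_subset_pCombinations hp0 v⟩) ?_
  rintro _ ⟨c, hc, hcs, rfl⟩ S ⟨hS, hvS⟩
  exact hS.sum_smul_mem (hvS (Or.inr rfl)) hp0 univ (fun i _ => hvS (Or.inl ⟨i, rfl⟩)) hc hcs

end Representation

section Reduction

variable {ι : Type*} [Fintype ι] {p : ℝ}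

theorem exists_add_smul_nonneg_eq_zero {c k : ι → ℝ} (hc : 0 ≤ c) {j : ι} (hj : k j < 0) :
    ∃ t : ℝ, 0 ≤ t ∧ 0 ≤ c + t • k ∧ ∃ i, (c + t • k) i = 0 := by
  classical
  obtain ⟨i₀, hi₀, hmin⟩ := (univ.filter fun i => k i < 0).exists_min_image
    (fun i => c i / -k i) ⟨j, by simp [hj]⟩
  have hk₀ : 0 < -k i₀ := neg_pos.2 (mem_filter.1 hi₀).2
  refine ⟨c i₀ / -k i₀, div_nonneg (hc i₀) hk₀.le, fun i => ?_, i₀, ?_⟩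
  · simp only [Pi.zero_apply, Pi.add_apply, Pi.smul_apply, smul_eq_mul]
    rcases lt_or_ge (k i) 0 with hki | hki
    · have := hmin i (by simp [hki])
      rw [le_div_iff₀ (neg_pos.2 hki)] at this
      linarith
    · have hci : 0 ≤ c i := hc i
      have := mul_nonneg (div_nonneg (hc i₀) hk₀.le) hki
      linarith
  · have : k i₀ ≠ 0 := by linarith
    simp only [Pi.add_apply, Pi.smul_apply, smul_eq_mul]
    field_simp
    ring

theorem concaveOn_sum_rpow_add_smul (hp0 : 0 ≤ p) (hp1 : p ≤ 1) (c k : ι → ℝ) :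
    ConcaveOn ℝ {t : ℝ | 0 ≤ c + t • k} fun t => ∑ i, (c + t • k) i ^ p := by
  have hF : ConcaveOn ℝ {x : ι → ℝ | 0 ≤ x} fun x => ∑ i, x i ^ p := by
    refine ⟨convex_Ici 0, fun x hx y hy a b ha hb hab => ?_⟩
    simp only [smul_eq_mul, mul_sum, ← sum_add_distrib]
    exact sum_le_sum fun i _ => (Real.concaveOn_rpow hp0 hp1).2 (hx i) (hy i) ha hb hab
  have hline : ∀ t : ℝ, AffineMap.lineMap c (c + k) t = c + t • k := fun t => by
    rw [AffineMap.lineMap_apply_module', add_sub_cancel_left, add_comm]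
  have h := hF.comp_affineMap (AffineMap.lineMap c (c + k))
  simp only [Set.preimage, Function.comp_def, hline] at h
  exact h

theorem exists_sum_rpow_add_smul_le_of_neg (hp0 : 0 ≤ p) (hp1 : p ≤ 1) {c k : ι → ℝ}
    (hc : 0 ≤ c) {j : ι} (hj : k j < 0) :
    ∃ t : ℝ, 0 ≤ c + t • k ∧ ∑ i, (c + t • k) i ^ p ≤ ∑ i, c i ^ p ∧ ∃ i, (c + t • k) i = 0 := by
  obtain ⟨t, ht, htk, htz⟩ := exists_add_smul_nonneg_eq_zero hc hj
  by_cases hpos : ∃ i, 0 < k i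
  · obtain ⟨i, hi⟩ := hpos
    obtain ⟨s, hs, hsk, hsz⟩ := exists_add_smul_nonneg_eq_zero (k := -k) hc (neg_lt_zero.2 hi)
    rw [smul_neg, ← neg_smul] at hsk hsz
    have := (concaveOn_sum_rpow_add_smul hp0 hp1 c k).min_le_of_mem_Icc (x := -s) (y := t)
      (z := 0) hsk htk ⟨by linarith, ht⟩
    rcases min_le_iff.1 this with h | h
    · exact ⟨-s, hsk, by simpa using h, hsz⟩
    · exact ⟨t, htk, by simpa using h, htz⟩
  · push Not at hpos
    refine ⟨t, htk, sum_le_sum fun i _ => Real.rpow_le_rpow (htk i) ?_ hp0, htz⟩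
    simpa using mul_nonpos_of_nonneg_of_nonpos ht (hpos i)

theorem exists_sum_rpow_add_smul_le (hp0 : 0 ≤ p) (hp1 : p ≤ 1) {c k : ι → ℝ}
    (hc : 0 ≤ c) (hk : k ≠ 0) :
    ∃ t : ℝ, 0 ≤ c + t • k ∧ ∑ i, (c + t • k) i ^ p ≤ ∑ i, c i ^ p ∧ ∃ i, (c + t • k) i = 0 := by
  obtain ⟨j, hj⟩ := Function.ne_iff.1 hk
  rcases hj.lt_or_gt with hneg | hpos
  · exact exists_sum_rpow_add_smul_le_of_neg hp0 hp1 hc hneg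
  · obtain ⟨t, h⟩ := exists_sum_rpow_add_smul_le_of_neg (k := -k) hp0 hp1 hc (neg_lt_zero.2 hpos)
    exact ⟨-t, by simpa [smul_neg, ← neg_smul] using h⟩

end Reduction

theorem pCombinations_subset_iUnion_succAbove {X : Type*} [AddCommGroup X] [Module ℝ X] {p : ℝ}
    (hp0 : 0 < p) (hp1 : p ≤ 1) {m : ℕ} {v : Fin (m + 1) → X} (hv : ¬LinearIndependent ℝ v) :
    pCombinations p v ⊆ ⋃ j : Fin (m + 1), pCombinations p (v ∘ j.succAbove) := by
  rintro _ ⟨c, hc, hcs, rfl⟩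
  obtain ⟨k, hkv, i, hki⟩ := Fintype.not_linearIndependent_iff.1 hv
  obtain ⟨t, hct, hle, j, hj⟩ :=
    exists_sum_rpow_add_smul_le hp0.le hp1 hc (Function.ne_iff.2 ⟨i, hki⟩)
  have hsum : ∑ i, (c + t • k) i • v i = ∑ i, c i • v i := by
    simp only [Pi.add_apply, Pi.smul_apply, smul_eq_mul, add_smul, mul_smul, sum_add_distrib,
      ← smul_sum, hkv, smul_zero, add_zero]
  refine Set.mem_iUnion.2 ⟨j, (c + t • k) ∘ j.succAbove, fun i => hct _, ?_, ?_⟩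
  · rw [Fin.sum_univ_succAbove _ j, hj, Real.zero_rpow hp0.ne', zero_add] at hle
    exact hle.trans hcs
  · rw [← hsum, Fin.sum_univ_succAbove _ j, hj, zero_smul, zero_add]
    rfl

theorem lemma_four_general (p : ℝ) (hp0 : 0 < p) (hp1 : p < 1) (n : ℕ)
    (P : Fin n → (Fin n → ℝ)) (Q : Fin n → ℝ)
    (M : Fin n → ℝ)
    (hM : M ∈ pConvHull p (Set.range P ∪ {Q} ∪ {0})) :
    ∃ g : Fin n → (Fin n → ℝ),
      (∀ i, g i ∈ Set.range P ∪ {Q}) ∧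
      M ∈ pConvHull p (Set.range g ∪ {0}) := by
  set v : Fin (n + 1) → Fin n → ℝ := Fin.cons Q P
  have hv : ¬LinearIndependent ℝ v := fun h => by simpa using h.fintype_card_le_finrank
  have hrange : Set.range v = Set.range P ∪ {Q} := by
    rw [Fin.range_cons, Set.insert_eq, Set.union_comm]
  rw [← hrange, pConvHull_range_union_zero hp0 hp1.le] at hM
  obtain ⟨j, hj⟩ := Set.mem_iUnion.1 (pCombinations_subset_iUnion_succAbove hp0 hp1.le hv hM)
  refine ⟨v ∘ j.succAbove, fun i => hrange ▸ Set.mem_range_self _, ?_⟩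
  rwa [pConvHull_range_union_zero hp0 hp1.le]

theorem lemma_four (p : ℝ) (hp0 : 0 < p) (hp1 : p < 1) (n : ℕ)
    (P : Fin n → (Fin n → ℝ)) (hP : LinearIndependent ℝ P) (Q : Fin n → ℝ)
    (M : Fin n → ℝ)
    (hM : M ∈ pConvHull p (Set.range P ∪ {Q} ∪ {0})) :
    ∃ g : Fin n → (Fin n → ℝ),
      (∀ i, g i ∈ Set.range P ∪ {Q}) ∧
      M ∈ pConvHull p (Set.range g ∪ {0}) :=
  lemma_four_general p hp0 hp1 n P Q M hM
end

section
/- Let 0<p<1, let {e_1,...,e_n} be the canonical basis of R^n. The p-convex hull of {e_1,...,e_n} together with 0 equals the positive part of the unit ball of ℓ_p^n: p-conv({e_1,...,e_n} ∪ {0}) = {x ∈ R^n : x_i ≥ 0, ∑_{i=1}^n x_i^p ≤ 1}. -/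
open Finset

private lemma add_rpow_le' {p u v : ℝ} (hp0 : 0 ≤ p) (hp1 : p ≤ 1) (hu : 0 ≤ u) (hv : 0 ≤ v) :
    (u + v) ^ p ≤ u ^ p + v ^ p := by
  have h := NNReal.rpow_add_le_add_rpow u.toNNReal v.toNNReal hp0 hp1
  have h2 := NNReal.coe_le_coe.mpr h
  rwa [NNReal.coe_add, NNReal.coe_rpow, NNReal.coe_rpow, NNReal.coe_rpow, NNReal.coe_add,
    Real.coe_toNNReal _ hu, Real.coe_toNNReal _ hv] at h2

private lemma mem_of_pconvex (p : ℝ) (hp0 : 0 < p) (hp1 : p < 1) (n : ℕ)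
    (S : Set (Fin n → ℝ)) (hS : PConvex p S)
    (hsub : ((Set.range fun i => (Pi.single i 1 : Fin n → ℝ)) ∪ {0}) ⊆ S) :
    ∀ k : ℕ, ∀ x : Fin n → ℝ, (univ.filter fun j => x j ≠ 0).card ≤ k →
      (∀ i, 0 ≤ x i) → (∑ i, x i ^ p) ≤ 1 → x ∈ S := by
  have h0S : (0 : Fin n → ℝ) ∈ S := hsub (Set.mem_union_right _ rfl)
  have heS : ∀ i : Fin n, (Pi.single i 1 : Fin n → ℝ) ∈ S := fun i =>
    hsub (Set.mem_union_left _ ⟨i, rfl⟩)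
  intro k
  induction k with
  | zero =>
    intro x hcard hpos _
    have hz : ∀ j, x j = 0 := by
      intro j
      by_contra hj
      have hmem : j ∈ univ.filter fun j => x j ≠ 0 := by simp [hj]
      have := Finset.card_pos.mpr ⟨j, hmem⟩
      omega
    have : x = 0 := funext hz
    rwa [this]
  | succ k ih =>
    intro x hcard hpos hsum
    by_cases hle : (univ.filter fun j => x j ≠ 0).card ≤ k
    · exact ih x hle hpos hsum
    · have hne : (univ.filter fun j => x j ≠ 0).Nonempty := by
        rw [← Finset.card_pos]; omega
      obtain ⟨i, hi⟩ := hne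
      have hxi : x i ≠ 0 := (Finset.mem_filter.mp hi).2
      have hxip : 0 < x i := lt_of_le_of_ne (hpos i) (Ne.symm hxi)
      have hterm : ∀ j, 0 ≤ x j ^ p := fun j => Real.rpow_nonneg (hpos j) p
      have hsplit : ∑ j, x j ^ p = x i ^ p + ∑ j ∈ univ.erase i, x j ^ p :=
        (Finset.add_sum_erase univ _ (Finset.mem_univ i)).symm
      have herase_nonneg : 0 ≤ ∑ j ∈ univ.erase i, x j ^ p :=
        Finset.sum_nonneg fun j _ => hterm j
      have hxi_le : x i ^ p ≤ 1 := by
        rw [hsplit] at hsum; linarith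
      by_cases hone : x i ^ p = 1
      · -- then x = e_i
        have hxi1 : x i = 1 := by
          have h1 : x i ^ (p * (1 / p)) = (x i ^ p) ^ (1 / p) :=
            Real.rpow_mul (hpos i) p (1 / p)
          rw [mul_one_div_cancel hp0.ne', Real.rpow_one, hone, Real.one_rpow] at h1
          exact h1
        have herase0 : ∑ j ∈ univ.erase i, x j ^ p ≤ 0 := by
          rw [hsplit, hone] at hsum; linarith
        have hall0 : ∀ j, j ≠ i → x j = 0 := by
          intro j hj
          by_contra hxj
          have hxjp : 0 < x j := lt_of_le_of_ne (hpos j) (Ne.symm hxj)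
          have hpos' : 0 < x j ^ p := Real.rpow_pos_of_pos hxjp p
          have hle0 : x j ^ p ≤ 0 := by
            have := Finset.single_le_sum (f := fun j => x j ^ p)
              (fun j _ => hterm j) (Finset.mem_erase.mpr ⟨hj, Finset.mem_univ j⟩)
            linarith
          linarith
        have : x = Pi.single i 1 := by
          funext j
          by_cases hj : j = i
          · subst hj; simpa using hxi1
          · rw [Pi.single_eq_of_ne hj, hall0 j hj]
        rw [this]; exact heS i
      · -- main case
        have hc : 0 < 1 - x i ^ p := lt_of_le_of_ne (by linarith) (by
          intro h; exact hone (by linarith))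
        set c := 1 - x i ^ p with hcdef
        set b := c ^ (1 / p) with hbdef
        have hb : 0 < b := Real.rpow_pos_of_pos hc _
        have hbp : b ^ p = c := by
          rw [hbdef, ← Real.rpow_mul hc.le, one_div_mul_cancel hp0.ne', Real.rpow_one]
        set z : Fin n → ℝ := fun j => if j = i then 0 else x j / b with hzdef
        have hzpos : ∀ j, 0 ≤ z j := by
          intro j
          by_cases hj : j = i
          · simp [hzdef, hj]
          · simp only [hzdef, if_neg hj]
            exact div_nonneg (hpos j) hb.le
        have hzcard : (univ.filter fun j => z j ≠ 0).card ≤ k := by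
          have hsubset : (univ.filter fun j => z j ≠ 0) ⊆
              (univ.filter fun j => x j ≠ 0).erase i := by
            intro j hj
            simp only [Finset.mem_filter, Finset.mem_univ, true_and] at hj
            have hji : j ≠ i := by
              intro h; apply hj; simp [hzdef, h]
            refine Finset.mem_erase.mpr ⟨hji, ?_⟩
            simp only [Finset.mem_filter, Finset.mem_univ, true_and]
            intro hxj
            apply hj
            simp [hzdef, if_neg hji, hxj]
          have := Finset.card_le_card hsubset
          rw [Finset.card_erase_of_mem hi] at this
          omega
        have hzsum : (∑ j, z j ^ p) ≤ 1 := by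
          have heq : ∑ j, z j ^ p = (∑ j ∈ univ.erase i, x j ^ p) / c := by
            rw [← Finset.add_sum_erase univ (fun j => z j ^ p) (Finset.mem_univ i)]
            have h1 : z i ^ p = 0 := by
              simp [hzdef, Real.zero_rpow hp0.ne']
            rw [h1, zero_add, Finset.sum_div]
            refine Finset.sum_congr rfl fun j hj => ?_
            have hji : j ≠ i := (Finset.mem_erase.mp hj).1
            rw [hzdef]
            simp only [if_neg hji]
            rw [Real.div_rpow (hpos j) hb.le, hbp]
          rw [heq, div_le_one hc]
          rw [hsplit] at hsum
          linarith
        have hzS : z ∈ S := ih z hzcard hzpos hzsum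
        have hx_eq : x = (x i) • (Pi.single i 1 : Fin n → ℝ) + b • z := by
          funext j
          by_cases hj : j = i
          · subst hj
            simp [hzdef, Pi.single_eq_same]
          · simp only [Pi.add_apply, Pi.smul_apply, smul_eq_mul,
              Pi.single_eq_of_ne hj, hzdef, if_neg hj, mul_zero, zero_add]
            rw [mul_div_cancel₀ _ hb.ne']
        rw [hx_eq]
        exact hS _ (heS i) z hzS (x i) b (hpos i) hb.le (by rw [hbp]; ring)

theorem pConvHull_basis (p : ℝ) (hp0 : 0 < p) (hp1 : p < 1) (n : ℕ) :
    pConvHull p ((Set.range fun i => (Pi.single i 1 : Fin n → ℝ)) ∪ {0}) =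
      {x : Fin n → ℝ | (∀ i, 0 ≤ x i) ∧ (∑ i, x i ^ p) ≤ 1} := by
  apply Set.Subset.antisymm
  · -- hull ⊆ ball: the ball is p-convex and contains the generators
    apply Set.sInter_subset_of_mem
    constructor
    · intro x hx y hy a b ha hb hab
      constructor
      · intro i
        exact add_nonneg (mul_nonneg ha (hx.1 i)) (mul_nonneg hb (hy.1 i))
      · have hstep : ∀ i : Fin n, (a * x i + b * y i) ^ p ≤
            a ^ p * x i ^ p + b ^ p * y i ^ p := by
          intro i
          calc (a * x i + b * y i) ^ p ≤ (a * x i) ^ p + (b * y i) ^ p :=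
                add_rpow_le' hp0.le hp1.le (mul_nonneg ha (hx.1 i)) (mul_nonneg hb (hy.1 i))
            _ = a ^ p * x i ^ p + b ^ p * y i ^ p := by
                rw [Real.mul_rpow ha (hx.1 i), Real.mul_rpow hb (hy.1 i)]
        calc (∑ i, (a • x + b • y) i ^ p)
            = ∑ i, (a * x i + b * y i) ^ p := by
              refine Finset.sum_congr rfl fun i _ => ?_
              simp
          _ ≤ ∑ i, (a ^ p * x i ^ p + b ^ p * y i ^ p) :=
              Finset.sum_le_sum fun i _ => hstep i
          _ = a ^ p * (∑ i, x i ^ p) + b ^ p * (∑ i, y i ^ p) := by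
              rw [Finset.sum_add_distrib, ← Finset.mul_sum, ← Finset.mul_sum]
          _ ≤ a ^ p * 1 + b ^ p * 1 := by
              have h1 := Real.rpow_nonneg ha p
              have h2 := Real.rpow_nonneg hb p
              have h3 := hx.2
              have h4 := hy.2
              have h5 : 0 ≤ ∑ i, x i ^ p := Finset.sum_nonneg fun i _ => Real.rpow_nonneg (hx.1 i) p
              have h6 : 0 ≤ ∑ i, y i ^ p := Finset.sum_nonneg fun i _ => Real.rpow_nonneg (hy.1 i) p
              nlinarith
          _ = 1 := by rw [mul_one, mul_one, hab]
    · rintro x (⟨i, rfl⟩ | rfl)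
      · constructor
        · intro j
          by_cases hj : j = i
          · subst hj; simp
          · simp [Pi.single_eq_of_ne hj]
        · have : ∀ j, (Pi.single i 1 : Fin n → ℝ) j ^ p = if j = i then 1 else 0 := by
            intro j
            by_cases hj : j = i
            · subst hj; simp
            · simp [Pi.single_eq_of_ne hj, Real.zero_rpow hp0.ne', hj]
          simp only [this]
          rw [Finset.sum_ite_eq' univ i (fun _ => (1 : ℝ))]
          simp
      · constructor
        · intro j; simp
        · simp [Real.zero_rpow hp0.ne']
  · -- ball ⊆ hull
    intro x hx
    intro S hSmem
    exact mem_of_pconvex p hp0 hp1 n S hSmem.1 hSmem.2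
      ((univ.filter fun j => x j ≠ 0).card) x le_rfl hx.1 hx.2
end
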